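/- arXiv:math/0608177 — 2 statements merged into one kernel-verified Lean document; each statement's English description precedes it below -/
import Mathlib

section
/- (Globevnik's Schwarz lemma) Let F : 𝔻 → Ω_n be holomorphic with F(ζ_1) = 0 for some ζ_1 ∈ 𝔻. Then for every ζ_2 ∈ 𝔻, the spectral radius satisfies r(F(ζ_2)) ≤ |(ζ_1 − ζ_2)/(1 − conj(ζ_1)·ζ_2)|. -/
/-!
For every `k` the trace `tr (F ζ ^ k)` is holomorphic on the disc and bounded there by `n`, since
it is the `k`-th power sum of the eigenvalues of `F ζ`. Writing `F ζ = (ζ - ζ₁) • G ζ`, it vanishes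
to order `k` at `ζ₁`, so a Schwarz–Pick argument bounds `‖tr (F ζ₂ ^ k)‖` by `n * m ^ k`, where `m`
is the pseudo-hyperbolic distance between `ζ₁` and `ζ₂`. Power sums control the largest eigenvalue:
if some eigenvalue `μ₀` of maximal modulus had `‖μ₀‖ > m`, the power sums of the eigenvalues divided
by `μ₀` would tend to `0`, whereas their Cesàro means tend to the multiplicity of `μ₀`.
-/

open Metric

/-- The spectral radius of a complex `n × n` matrix. -/
noncomputable def sRad {n : ℕ} (A : Matrix (Fin n) (Fin n) ℂ) : ℝ :=
  sSup ((fun μ => ‖μ‖) '' spectrum ℂ A)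

open Filter Topology Module ComplexConjugate

namespace LinearMap

theorem trace_pow_eq_of_isNilpotent_sub_algebraMap {R M : Type*} [CommRing R] [IsReduced R]
    [AddCommGroup M] [Module R M] [Free R M] [Module.Finite R M] {g : End R M} (μ : R)
    (hg : IsNilpotent (g - algebraMap R (End R M) μ)) (k : ℕ) :
    trace R M (g ^ k) = μ ^ k * finrank R M := by
  induction k with
  | zero => simp
  | succ k ih =>
    rw [pow_succ, End.mul_eq_comp,
      trace_comp_eq_mul_of_commute_of_isNilpotent μ ((Commute.refl g).pow_left k) hg, ih]
    ring

theorem trace_pow_eq_sum_roots_charpoly {K V : Type*} [Field K] [IsAlgClosed K] [AddCommGroup V]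
    [Module K V] [FiniteDimensional K V] (f : End K V) (k : ℕ) :
    trace K V (f ^ k) = (f.charpoly.roots.map (· ^ k)).sum := by
  classical
  have hds := DirectSum.isInternal_submodule_of_iSupIndep_of_iSup_eq_top
    f.independent_maxGenEigenspace f.iSup_maxGenEigenspace_eq_top
  have hfin : {μ | f.maxGenEigenspace μ ≠ ⊥}.Finite :=
    WellFoundedGT.finite_ne_bot_of_iSupIndep f.independent_maxGenEigenspace
  have hsupp : hfin.toFinset = f.charpoly.roots.toFinset := by
    ext μ
    rw [Set.Finite.mem_toFinset, Set.mem_ofPred_eq, Multiset.mem_toFinset,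
      ← Multiset.count_ne_zero, Polynomial.count_roots, ← finrank_maxGenEigenspace_eq]
    exact Submodule.finrank_eq_zero.not.symm
  rw [trace_eq_sum_trace_restrict' hds hfin
      fun μ => f.mapsTo_maxGenEigenspace_of_comm ((Commute.refl f).pow_right k) μ,
    Finset.sum_multiset_map_count, hsupp]
  refine Finset.sum_congr rfl fun μ _ => ?_
  have hμ := f.mapsTo_maxGenEigenspace_of_comm (Commute.refl f) μ
  have hnil : IsNilpotent (f.restrict hμ - algebraMap K _ μ) :=
    f.isNilpotent_restrict_maxGenEigenspace_sub_algebraMap μ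
  rw [← End.pow_restrict k hμ, trace_pow_eq_of_isNilpotent_sub_algebraMap μ hnil,
    finrank_maxGenEigenspace_eq, Polynomial.count_roots, nsmul_eq_mul, mul_comm]

end LinearMap

theorem Matrix.mem_roots_charpoly_iff_mem_spectrum {ι K : Type*} [Fintype ι] [DecidableEq ι]
    [Field K] {A : Matrix ι ι K} {μ : K} : μ ∈ A.charpoly.roots ↔ μ ∈ spectrum K A := by
  rw [Polynomial.mem_roots A.charpoly_monic.ne_zero, Matrix.mem_spectrum_iff_isRoot_charpoly]

theorem Matrix.trace_pow_eq_sum_roots_charpoly {ι K : Type*} [Fintype ι] [DecidableEq ι] [Field K]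
    [IsAlgClosed K] (A : Matrix ι ι K) (k : ℕ) :
    (A ^ k).trace = (A.charpoly.roots.map (· ^ k)).sum := by
  rw [← Matrix.trace_toLin'_eq, Matrix.toLin'_pow, LinearMap.trace_pow_eq_sum_roots_charpoly,
    Matrix.charpoly_toLin']

theorem tendsto_cesaro_pow_of_norm_le_one {x : ℂ} (hx : ‖x‖ ≤ 1) :
    Tendsto (fun K : ℕ => (K : ℝ)⁻¹ • ∑ k ∈ Finset.range K, x ^ k) atTop
      (𝓝 (if x = 1 then 1 else 0)) := by
  by_cases hx1 : x = 1
  · subst hx1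
    refine tendsto_const_nhds.congr' ?_
    filter_upwards [eventually_ne_atTop 0] with K hK
    simp [Complex.real_smul, hK]
  · rw [if_neg hx1]
    refine tendsto_inv_atTop_nhds_zero_nat.zero_smul_isBoundedUnder_le
      (isBoundedUnder_of ⟨2 / ‖x - 1‖, fun K => ?_⟩)
    have hx1' : 0 < ‖x - 1‖ := norm_pos_iff.mpr (sub_ne_zero.mpr hx1)
    rw [Function.comp_apply, geom_sum_eq hx1, norm_div]
    gcongr
    calc ‖x ^ K - 1‖ ≤ ‖x‖ ^ K + 1 := by simpa using norm_sub_le (x ^ K) 1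
      _ ≤ 2 := by linarith [pow_le_one₀ (n := K) (norm_nonneg x) hx]

theorem Multiset.one_notMem_of_tendsto_sum_map_pow (M : Multiset ℂ) (hM : ∀ x ∈ M, ‖x‖ ≤ 1)
    (h : Tendsto (fun k => (M.map (· ^ k)).sum) atTop (𝓝 0)) : 1 ∉ M := by
  have hlim := tendsto_multiset_sum M fun x hx => tendsto_cesaro_pow_of_norm_le_one (hM x hx)
  rw [Multiset.sum_map_eq_nsmul_single 1 fun x hx _ => if_neg hx, if_pos rfl, nsmul_one] at hlim
  have hces : Tendsto (fun K : ℕ => (K : ℝ)⁻¹ • ∑ k ∈ Finset.range K, (M.map (· ^ k)).sum) atTop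
      (𝓝 (M.count 1 : ℂ)) := by
    convert hlim using 2 with K
    simp only [Finset.sum_eq_multiset_sum, Multiset.smul_sum, Multiset.map_map, Function.comp_def]
    rw [Multiset.sum_map_sum_map]
  rw [← Multiset.count_eq_zero, ← Nat.cast_eq_zero (R := ℂ)]
  exact tendsto_nhds_unique hces h.cesaro_smul

theorem Multiset.norm_le_of_norm_sum_map_pow_le (M : Multiset ℂ) {C m : ℝ} (hm : 0 ≤ m)
    (h : ∀ k, ‖(M.map (· ^ k)).sum‖ ≤ C * m ^ k) : ∀ x ∈ M, ‖x‖ ≤ m := by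
  intro x hx
  by_contra! hxm
  obtain ⟨y, hyM, hymax⟩ :=
    M.exists_max_image (‖·‖) (ne_of_mem_of_not_mem' hx (Multiset.notMem_zero x))
  have hmy : m < ‖y‖ := hxm.trans_le (hymax x hx)
  have hy : 0 < ‖y‖ := hm.trans_lt hmy
  refine (M.map (· / y)).one_notMem_of_tendsto_sum_map_pow ?_ ?_
    (Multiset.mem_map.mpr ⟨y, hyM, div_self (norm_pos_iff.mp hy)⟩)
  · simp only [Multiset.mem_map, forall_exists_index, and_imp, forall_apply_eq_imp_iff₂]
    intro z hz
    rw [norm_div, div_le_one hy]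
    exact hymax z hz
  · have hgeom : Tendsto (fun k => C * (m / ‖y‖) ^ k) atTop (𝓝 0) := by
      simpa using (tendsto_pow_atTop_nhds_zero_of_lt_one (by positivity)
        ((div_lt_one hy).mpr hmy)).const_mul C
    refine squeeze_zero_norm (fun k => ?_) hgeom
    rw [Multiset.map_map, Function.comp_def]
    simp only [div_pow]
    rw [Multiset.sum_map_div, norm_div, norm_pow, ← mul_div_assoc]
    gcongr
    exact h k

section SpectralRadius

variable {n : ℕ} {A : Matrix (Fin n) (Fin n) ℂ}

theorem norm_le_sRad {μ : ℂ} (hμ : μ ∈ spectrum ℂ A) : ‖μ‖ ≤ sRad A :=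
  le_csSup ((A.finite_spectrum.image _).bddAbove) ⟨μ, hμ, rfl⟩

theorem sRad_le {m : ℝ} (hm : 0 ≤ m) (h : ∀ μ ∈ spectrum ℂ A, ‖μ‖ ≤ m) : sRad A ≤ m :=
  Real.sSup_le (by rintro _ ⟨μ, hμ, rfl⟩; exact h μ hμ) hm

theorem norm_trace_pow_le_of_sRad_le_one (hA : sRad A ≤ 1) (k : ℕ) : ‖(A ^ k).trace‖ ≤ n := by
  rw [A.trace_pow_eq_sum_roots_charpoly]
  calc ‖(A.charpoly.roots.map (· ^ k)).sum‖
      ≤ (A.charpoly.roots.map fun _ => (1 : ℝ)).sum := by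
        refine (norm_multiset_sum_le _).trans ?_
        rw [Multiset.map_map]
        refine Multiset.sum_map_le_sum_map _ _ fun μ hμ => ?_
        rw [Function.comp_apply, norm_pow]
        exact pow_le_one₀ (norm_nonneg μ)
          ((norm_le_sRad (Matrix.mem_roots_charpoly_iff_mem_spectrum.mp hμ)).trans hA)
    _ ≤ n := by
        simpa using Polynomial.card_roots' A.charpoly |>.trans_eq A.charpoly_natDegree_eq_dim

theorem sRad_le_of_norm_trace_pow_le {C m : ℝ} (hm : 0 ≤ m)
    (h : ∀ k, ‖(A ^ k).trace‖ ≤ C * m ^ k) : sRad A ≤ m :=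
  sRad_le hm fun μ hμ => A.charpoly.roots.norm_le_of_norm_sum_map_pow_le hm
    (fun k => A.trace_pow_eq_sum_roots_charpoly k ▸ h k) μ
    (Matrix.mem_roots_charpoly_iff_mem_spectrum.mpr hμ)

end SpectralRadius

theorem Complex.norm_one_sub_conj_mul_sq (a z : ℂ) :
    ‖1 - conj a * z‖ ^ 2 = ‖z - a‖ ^ 2 + (1 - ‖a‖ ^ 2) * (1 - ‖z‖ ^ 2) := by
  simp only [Complex.sq_norm, normSq_apply, sub_re, sub_im, mul_re, mul_im, conj_re, conj_im,
    one_re, one_im]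
  ring

theorem Complex.norm_one_sub_conj_mul_le {a z : ℂ} (haz : ‖a‖ < ‖z‖) (hz : ‖z‖ ≤ 1) :
    ‖1 - conj a * z‖ ≤ (1 + (1 - ‖z‖ ^ 2) / (‖z‖ - ‖a‖) ^ 2) * ‖z - a‖ := by
  have hdist : ‖z‖ - ‖a‖ ≤ ‖z - a‖ := norm_sub_norm_le z a
  have hz2 : 0 ≤ 1 - ‖z‖ ^ 2 := sub_nonneg.mpr (pow_le_one₀ (norm_nonneg z) hz)
  have hδ : 0 ≤ (1 - ‖z‖ ^ 2) / (‖z‖ - ‖a‖) ^ 2 := by positivity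
  have hslack :
      (1 - ‖a‖ ^ 2) * (1 - ‖z‖ ^ 2) ≤ (1 - ‖z‖ ^ 2) / (‖z‖ - ‖a‖) ^ 2 * ‖z - a‖ ^ 2 := by
    rw [div_mul_eq_mul_div, le_div_iff₀ (by nlinarith)]
    have : (‖z‖ - ‖a‖) ^ 2 ≤ ‖z - a‖ ^ 2 := pow_le_pow_left₀ (by linarith) hdist 2
    nlinarith [mul_le_mul_of_nonneg_left this hz2,
      mul_nonneg (mul_nonneg (sq_nonneg ‖a‖) hz2) (sq_nonneg (‖z‖ - ‖a‖))]
  refine (pow_le_pow_iff_left₀ (norm_nonneg _) (by positivity) two_ne_zero).mp ?_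
  rw [norm_one_sub_conj_mul_sq, mul_pow]
  set δ := (1 - ‖z‖ ^ 2) / (‖z‖ - ‖a‖) ^ 2
  nlinarith [mul_nonneg hδ (sq_nonneg ‖z - a‖), mul_nonneg (mul_nonneg hδ hδ) (sq_nonneg ‖z - a‖)]

theorem Complex.norm_le_of_tendsto_of_forall_sphere_norm_le {E : Type*} [NormedAddCommGroup E]
    [NormedSpace ℂ E] {f : ℂ → E} (hf : DifferentiableOn ℂ f (ball 0 1)) {g : ℝ → ℝ} {C : ℝ}
    (hg : Tendsto g (𝓝[<] 1) (𝓝 C)) (hfg : ∀ᶠ s in 𝓝[<] 1, ∀ z : ℂ, ‖z‖ = s → ‖f z‖ ≤ g s)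
    {w : ℂ} (hw : ‖w‖ < 1) : ‖f w‖ ≤ C := by
  refine ge_of_tendsto hg ?_
  filter_upwards [hfg, Ioo_mem_nhdsLT hw] with s hs hws
  have hs0 : s ≠ 0 := ((norm_nonneg w).trans_lt hws.1).ne'
  refine norm_le_of_forall_mem_frontier_norm_le isBounded_ball
    (hf.diffContOnCl_ball (closedBall_subset_ball hws.2)) (fun z hz => hs z ?_) ?_
  · rwa [frontier_ball 0 hs0, mem_sphere_zero_iff_norm] at hz
  · rw [closure_ball 0 hs0, mem_closedBall_zero_iff]
    exact hws.1.le

theorem Complex.norm_sub_pow_mul_le_of_forall_norm_le {u : ℂ → ℂ}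
    (hu : DifferentiableOn ℂ u (ball 0 1)) {a : ℂ} (ha : a ∈ ball (0 : ℂ) 1) {C : ℝ} (k : ℕ)
    (hC : ∀ z ∈ ball (0 : ℂ) 1, ‖(z - a) ^ k * u z‖ ≤ C) {w : ℂ} (hw : w ∈ ball (0 : ℂ) 1) :
    ‖(w - a) ^ k * u w‖ ≤ C * ‖(a - w) / (1 - conj a * w)‖ ^ k := by
  rw [mem_ball_zero_iff] at ha hw
  have hden : 1 - conj a * w ≠ 0 := by
    refine sub_ne_zero.mpr (fun h => ?_)
    have : ‖conj a * w‖ < 1 := by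
      rw [norm_mul, norm_conj]
      nlinarith [norm_nonneg a, norm_nonneg w]
    rw [← h, norm_one] at this
    exact lt_irrefl _ this
  -- On the circle `‖z‖ = s` we have `‖1 - conj a * z‖ ≤ ρ s * ‖z - a‖`, and `ρ s → 1` as `s → 1`.
  set ρ : ℝ → ℝ := fun s => 1 + (1 - s ^ 2) / (s - ‖a‖) ^ 2
  have hρ : Tendsto (fun s => C * ρ s ^ k) (𝓝[<] 1) (𝓝 C) := by
    have hcont : ContinuousAt (fun s => C * ρ s ^ k) 1 := by
      have : (1 : ℝ) - ‖a‖ ≠ 0 := by linarith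
      fun_prop (disch := simpa using this)
    simpa [ρ] using hcont.tendsto.mono_left nhdsWithin_le_nhds
  have hmax : ‖(1 - conj a * w) ^ k * u w‖ ≤ C := by
    refine norm_le_of_tendsto_of_forall_sphere_norm_le
      (((differentiableOn_const _).sub (differentiableOn_id.const_mul _)).pow k |>.mul hu) hρ ?_ hw
    filter_upwards [Ioo_mem_nhdsLT ha] with s hs z hz
    have hzball : z ∈ ball (0 : ℂ) 1 := mem_ball_zero_iff.mpr (hz ▸ hs.2)
    rw [← hz] at hs ⊢
    calc ‖(1 - conj a * z) ^ k * u z‖ = ‖1 - conj a * z‖ ^ k * ‖u z‖ := by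
          rw [norm_mul, norm_pow]
      _ ≤ (ρ ‖z‖ * ‖z - a‖) ^ k * ‖u z‖ := by
          gcongr
          exact norm_one_sub_conj_mul_le hs.1 hs.2.le
      _ = ρ ‖z‖ ^ k * ‖(z - a) ^ k * u z‖ := by
          rw [norm_mul, norm_pow, mul_pow, mul_assoc]
      _ ≤ ρ ‖z‖ ^ k * C := by
          have hρ0 : 0 ≤ ρ ‖z‖ := add_nonneg zero_le_one <|
            div_nonneg (sub_nonneg.mpr (pow_le_one₀ (norm_nonneg z) hs.2.le)) (sq_nonneg _)
          gcongr
          exact hC z hzball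
      _ = C * ρ ‖z‖ ^ k := mul_comm _ _
  calc ‖(w - a) ^ k * u w‖
        = ‖(a - w) / (1 - conj a * w)‖ ^ k * ‖(1 - conj a * w) ^ k * u w‖ := by
        have hD : ‖1 - conj a * w‖ ^ k ≠ 0 := pow_ne_zero k (norm_ne_zero_iff.mpr hden)
        rw [norm_mul, norm_mul, norm_pow, norm_pow, norm_div, div_pow, norm_sub_rev a w,
          div_mul_eq_mul_div, eq_div_iff hD]
        ring
    _ ≤ ‖(a - w) / (1 - conj a * w)‖ ^ k * C := by gcongr
    _ = C * ‖(a - w) / (1 - conj a * w)‖ ^ k := mul_comm _ _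

theorem Matrix.differentiableOn_trace_pow {𝕜 ι : Type*} [NontriviallyNormedField 𝕜] [Fintype ι]
    [DecidableEq ι] {G : 𝕜 → Matrix ι ι 𝕜} {U : Set 𝕜}
    (hG : ∀ i j, DifferentiableOn 𝕜 (fun ζ => G ζ i j) U) (k : ℕ) :
    DifferentiableOn 𝕜 (fun ζ => (G ζ ^ k).trace) U := by
  have hpow : ∀ k i j, DifferentiableOn 𝕜 (fun ζ => (G ζ ^ k) i j) U := by
    intro k
    induction k with
    | zero => intro i j; simp only [pow_zero]; exact differentiableOn_const _
    | succ k ih =>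
      intro i j
      simp only [pow_succ, Matrix.mul_apply]
      exact DifferentiableOn.fun_sum fun l _ => (ih i l).mul (hG l j)
  simp only [Matrix.trace, Matrix.diag]
  exact DifferentiableOn.fun_sum fun i _ => hpow k i i

theorem Matrix.exists_differentiableOn_eq_sub_smul {ι : Type*} {F : ℂ → Matrix ι ι ℂ} {U : Set ℂ}
    {a : ℂ} (hU : U ∈ 𝓝 a) (hF : ∀ i j, DifferentiableOn ℂ (fun ζ => F ζ i j) U) (ha : F a = 0) :
    ∃ G : ℂ → Matrix ι ι ℂ, (∀ i j, DifferentiableOn ℂ (fun ζ => G ζ i j) U) ∧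
      ∀ ζ, F ζ = (ζ - a) • G ζ := by
  refine ⟨fun ζ => Matrix.of fun i j => dslope (fun z => F z i j) a ζ,
    fun i j => (Complex.differentiableOn_dslope hU).mpr (hF i j), fun ζ => ?_⟩
  ext i j
  simpa [ha] using (sub_smul_dslope (fun z => F z i j) a ζ).symm

/-- (Globevnik) If `F : 𝔻 → Ω_n` is holomorphic and `F(ζ₁) = 0`, then
`r(F(ζ₂)) ≤ |(ζ₁ - ζ₂)/(1 - conj(ζ₁)ζ₂)|` for every `ζ₂ ∈ 𝔻`. -/
theorem stmt8 {n : ℕ} (F : ℂ → Matrix (Fin n) (Fin n) ℂ)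
    (hol : ∀ i j : Fin n, DifferentiableOn ℂ (fun ζ => F ζ i j) (ball (0 : ℂ) 1))
    (hmap : ∀ ζ ∈ ball (0 : ℂ) 1, sRad (F ζ) < 1)
    (ζ₁ : ℂ) (hζ₁ : ζ₁ ∈ ball (0 : ℂ) 1) (hF0 : F ζ₁ = 0) :
    ∀ ζ₂ ∈ ball (0 : ℂ) 1,
      sRad (F ζ₂) ≤ ‖(ζ₁ - ζ₂) / (1 - (starRingEnd ℂ ζ₁) * ζ₂)‖ := by
  intro ζ₂ hζ₂
  obtain ⟨G, hG, hFG⟩ :=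
    Matrix.exists_differentiableOn_eq_sub_smul (isOpen_ball.mem_nhds hζ₁) hol hF0
  have htrace : ∀ k ζ, (F ζ ^ k).trace = (ζ - ζ₁) ^ k * (G ζ ^ k).trace := fun k ζ => by
    rw [hFG, smul_pow, Matrix.trace_smul, smul_eq_mul]
  refine sRad_le_of_norm_trace_pow_le (C := n) (norm_nonneg _) fun k => ?_
  rw [htrace]
  refine Complex.norm_sub_pow_mul_le_of_forall_norm_le (Matrix.differentiableOn_trace_pow hG k)
    hζ₁ k (fun z hz => ?_) hζ₂
  rw [← htrace]
  exact norm_trace_pow_le_of_sRad_le_one (hmap z hz).le k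
end

section
/- (Ransford–White) Let G : Ω_n → Ω_n be holomorphic with G(0) = 0. Then r(G(X)) ≤ r(X) for all X ∈ Ω_n. -/
attribute [local instance] Matrix.normedAddCommGroup Matrix.normedSpace

/-- The spectral unit ball `Ω_n`. -/
def specBall (n : ℕ) : Set (Matrix (Fin n) (Fin n) ℂ) := {W | sRad W < 1}

/-!
Fix `X` with `r(X) < t < 1`. The map `g z = G (z • X)` is holomorphic on the closed disc of
radius `1/t` and sends it into the spectral unit ball. On this compact image the powers are
uniformly bounded, say by `C`: every point has a power of norm `< 1`, an open condition. As
`g 0 = 0`, `h z = g z / z` is holomorphic, and the maximum modulus principle for `h ^ k` on the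
circle of radius `1/t` gives `‖G(X) ^ k‖ = ‖h 1 ^ k‖ ≤ C t ^ k`, whence `r(G X) ≤ t`.
This works in any complex Banach algebra; matrices are moved into one, operators on `ℂⁿ` with
the operator norm, since the entrywise norm is not submultiplicative.
-/

open Metric Set Filter Topology
open scoped NNReal ENNReal

theorem le_of_forall_pow_le_mul_pow {x y C : ℝ} (hy : 0 ≤ y) (h : ∀ k : ℕ, x ^ k ≤ C * y ^ k) :
    x ≤ y := by
  by_contra! hyx
  have hx : 0 < x := hy.trans_lt hyx
  have hq : Tendsto (fun k : ℕ => C * (y / x) ^ k) atTop (𝓝 0) := by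
    simpa using (tendsto_pow_atTop_nhds_zero_of_lt_one (by positivity)
      ((div_lt_one hx).mpr hyx)).const_mul C
  obtain ⟨k, hk⟩ := (hq.eventually_lt_const one_pos).exists
  have := h k
  rw [div_pow, mul_div_assoc', div_lt_one (by positivity)] at hk
  linarith

theorem norm_pow_le_of_norm_pow_le_one {A : Type*} [NormedRing A] {b : A} {m : ℕ} {R : ℝ}
    (hm : 0 < m) (hbm : ‖b ^ m‖ ≤ 1) (hR : 1 ≤ R) (hb : ‖b‖ ≤ R) (k : ℕ) :
    ‖b ^ k‖ ≤ max ‖(1 : A)‖ (R ^ m) := by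
  have hperiod : ∀ q r, ‖b ^ (m * q + r)‖ ≤ ‖b ^ r‖ := by
    intro q r
    induction q with
    | zero => simp
    | succ q ih => calc
        ‖b ^ (m * (q + 1) + r)‖ = ‖b ^ m * b ^ (m * q + r)‖ := by rw [← pow_add]; ring_nf
        _ ≤ ‖b ^ m‖ * ‖b ^ (m * q + r)‖ := norm_mul_le _ _
        _ ≤ ‖b ^ r‖ := (mul_le_of_le_one_left (norm_nonneg _) hbm).trans ih
  refine (Nat.div_add_mod k m ▸ hperiod (k / m) (k % m)).trans ?_
  rcases Nat.eq_zero_or_pos (k % m) with h | h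
  · simp [h]
  calc ‖b ^ (k % m)‖ ≤ ‖b‖ ^ (k % m) := norm_pow_le' b h
    _ ≤ R ^ (k % m) := by gcongr
    _ ≤ R ^ m := pow_le_pow_right₀ hR (Nat.mod_lt k hm).le
    _ ≤ _ := le_max_right _ _

namespace spectrum

variable {𝕜 A : Type*}

theorem spectralRadius_smul [NormedField 𝕜] [Ring A] [Algebra 𝕜 A] (k : 𝕜) (a : A) :
    spectralRadius 𝕜 (k • a) = ‖k‖₊ * spectralRadius 𝕜 a := by
  rcases eq_or_ne k 0 with rfl | hk
  · simp
  have hka : k • a = Units.mk0 k hk • a := rfl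
  rw [spectralRadius, spectralRadius, hka, unit_smul_eq_smul, ← Set.image_smul, iSup_image]
  simp [ENNReal.mul_iSup]

theorem spectralRadius_le_of_norm_pow_le [NormedField 𝕜] [NormedRing A] [NormedAlgebra 𝕜 A]
    [CompleteSpace A] {a : A} {C t : ℝ} (ht : 0 ≤ t) (h : ∀ k : ℕ, ‖a ^ k‖ ≤ C * t ^ k) :
    spectralRadius 𝕜 a ≤ ENNReal.ofReal t := by
  refine iSup₂_le fun μ hμ => ?_
  have hμt : ‖μ‖ ≤ t := le_of_forall_pow_le_mul_pow ht fun k => calc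
    ‖μ‖ ^ k = ‖μ ^ k‖ := (norm_pow μ k).symm
    _ ≤ ‖a ^ k‖ * ‖(1 : A)‖ := norm_le_norm_mul_of_mem (pow_mem_pow a k hμ)
    _ ≤ C * t ^ k * ‖(1 : A)‖ := by gcongr; exact h k
    _ = ‖(1 : A)‖ * C * t ^ k := by ring
  rw [← ENNReal.ofReal_coe_nnreal, coe_nnnorm]
  exact ENNReal.ofReal_le_ofReal hμt

variable [NormedRing A] [NormedAlgebra ℂ A] [CompleteSpace A]

theorem exists_norm_pow_lt_one {a : A} (ha : spectralRadius ℂ a < 1) :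
    ∃ m, 0 < m ∧ ‖a ^ m‖ < 1 := by
  obtain ⟨m, hm, hm0⟩ := ((pow_nnnorm_pow_one_div_tendsto_nhds_spectralRadius a).eventually_lt_const
    ha |>.and (eventually_gt_atTop 0)).exists
  refine ⟨m, hm0, ?_⟩
  have : ‖a ^ m‖₊ < 1 := by
    by_contra! h
    exact (ENNReal.one_le_rpow (by exact_mod_cast h) (by positivity)).not_gt hm
  exact_mod_cast this

end spectrum

section BanachAlgebra

variable {A : Type*} [NormedRing A] [NormedAlgebra ℂ A] [CompleteSpace A]

theorem IsCompact.isBounded_iUnion_image_pow {S : Set A} (hS : IsCompact S)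
    (hr : ∀ a ∈ S, spectralRadius ℂ a < 1) : Bornology.IsBounded (⋃ k : ℕ, (· ^ k) '' S) := by
  refine hS.induction_on (p := fun T => Bornology.IsBounded (⋃ k : ℕ, (· ^ k) '' T)) (by simp)
    (fun T T' hTT' h => h.subset (iUnion_mono fun k => image_mono hTT'))
    (fun T T' h h' => by simpa [image_union, iUnion_union_distrib] using h.union h') ?_
  intro a ha
  obtain ⟨m, hm, ham⟩ := spectrum.exists_norm_pow_lt_one (hr a ha)
  have hV : IsOpen ({b : A | ‖b ^ m‖ < 1} ∩ {b | ‖b‖ < ‖a‖ + 1}) :=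
    (isOpen_lt (continuous_pow m).norm continuous_const).inter
      (isOpen_lt continuous_norm continuous_const)
  have haV : a ∈ {b : A | ‖b ^ m‖ < 1} ∩ {b | ‖b‖ < ‖a‖ + 1} := ⟨ham, lt_add_one ‖a‖⟩
  refine ⟨_, mem_nhdsWithin_of_mem_nhds (hV.mem_nhds haV),
    isBounded_iff_forall_norm_le.mpr ⟨max ‖(1 : A)‖ ((‖a‖ + 1) ^ m), ?_⟩⟩
  rintro _ ⟨_, ⟨k, rfl⟩, b, hb, rfl⟩
  exact norm_pow_le_of_norm_pow_le_one hm hb.1.le (by linarith [norm_nonneg a]) hb.2.le k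

theorem spectralRadius_le_of_differentiableOn_closedBall {g : ℂ → A} {s : ℝ}
    (hg : DifferentiableOn ℂ g (closedBall 0 s)) (hg0 : g 0 = 0)
    (hr : ∀ z ∈ closedBall (0 : ℂ) s, spectralRadius ℂ (g z) < 1) {w : ℂ} (hw : ‖w‖ < s) :
    spectralRadius ℂ (g w) ≤ ENNReal.ofReal (‖w‖ / s) := by
  have hs : 0 < s := (norm_nonneg w).trans_lt hw
  obtain ⟨C, hC⟩ := isBounded_iff_forall_norm_le.mp
    (((isCompact_closedBall 0 s).image_of_continuousOn hg.continuousOn).isBounded_iUnion_image_pow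
      (forall_mem_image.mpr hr))
  have hpow (z : ℂ) (hz : z ∈ closedBall 0 s) (k : ℕ) : ‖g z ^ k‖ ≤ C :=
    hC _ (mem_iUnion.mpr ⟨k, g z, mem_image_of_mem g hz, rfl⟩)
  set h := dslope g 0
  have hh : DifferentiableOn ℂ h (closedBall 0 s) :=
    (Complex.differentiableOn_dslope (closedBall_mem_nhds 0 hs)).mpr hg
  have hgh (z : ℂ) : g z = z • h z := by simpa [hg0] using (sub_smul_dslope g 0 z).symm
  have hhk (k : ℕ) : ‖h w ^ k‖ ≤ C / s ^ k := by
    refine Complex.norm_le_of_forall_mem_frontier_norm_le (f := fun z => h z ^ k) isBounded_ball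
      (by rw [← closure_ball 0 hs.ne'] at hh; exact (hh.pow k).diffContOnCl) (fun z hz => ?_)
      (subset_closure (mem_ball_zero_iff.mpr hw))
    rw [frontier_ball 0 hs.ne', mem_sphere_zero_iff_norm] at hz
    have := hpow z (mem_closedBall_zero_iff.mpr hz.le) k
    rw [hgh z, smul_pow, norm_smul, norm_pow, hz] at this
    rw [le_div_iff₀ (by positivity), mul_comm]
    exact this
  refine spectrum.spectralRadius_le_of_norm_pow_le (C := C) (by positivity) fun k => ?_
  calc ‖g w ^ k‖ = ‖w‖ ^ k * ‖h w ^ k‖ := by rw [hgh, smul_pow, norm_smul, norm_pow]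
    _ ≤ ‖w‖ ^ k * (C / s ^ k) := by gcongr; exact hhk k
    _ = C * (‖w‖ / s) ^ k := by rw [div_pow]; ring

theorem spectralRadius_apply_le_of_mapsTo {G : A → A}
    (hG : DifferentiableOn ℂ G {a | spectralRadius ℂ a < 1})
    (hmap : MapsTo G {a | spectralRadius ℂ a < 1} {a | spectralRadius ℂ a < 1}) (h0 : G 0 = 0)
    {x : A} (hx : spectralRadius ℂ x < 1) : spectralRadius ℂ (G x) ≤ spectralRadius ℂ x := by
  refine le_of_forall_gt_imp_ge_of_dense fun c hxc => ?_
  rcases le_or_gt 1 c with hc | hc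
  · exact (hmap hx).le.trans hc
  lift c to ℝ≥0 using hc.ne_top
  have hc0 : c ≠ 0 := by rintro rfl; exact not_lt_zero hxc
  have hc1 : c < 1 := by exact_mod_cast hc
  have hball : ∀ z ∈ closedBall (0 : ℂ) (c : ℝ)⁻¹, spectralRadius ℂ (z • x) < 1 := by
    intro z hz
    rw [mem_closedBall_zero_iff] at hz
    rw [spectrum.spectralRadius_smul]
    calc (‖z‖₊ : ℝ≥0∞) * spectralRadius ℂ x ≤ (c⁻¹ : ℝ≥0) * spectralRadius ℂ x := by
          gcongr; rw [← NNReal.coe_le_coe]; simpa using hz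
      _ < (c⁻¹ : ℝ≥0) * c := by
          gcongr; exact ENNReal.coe_ne_top
      _ = 1 := by rw [← ENNReal.coe_mul, inv_mul_cancel₀ hc0, ENNReal.coe_one]
  have hGx := spectralRadius_le_of_differentiableOn_closedBall (g := fun z => G (z • x))
    (hG.comp (differentiable_id.smul_const x).differentiableOn hball) (by simp [h0])
    (fun z hz => hmap (hball z hz)) (w := 1)
    (by simpa using (one_lt_inv₀ (by positivity)).mpr (NNReal.coe_lt_one.mpr hc1))
  simpa using hGx

end BanachAlgebra

section Matrix

variable {n : ℕ}

theorem sRad_nonneg (M : Matrix (Fin n) (Fin n) ℂ) : 0 ≤ sRad M :=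
  Real.sSup_nonneg (forall_mem_image.mpr fun μ _ => norm_nonneg μ)

theorem ofReal_sRad (M : Matrix (Fin n) (Fin n) ℂ) :
    ENNReal.ofReal (sRad M) = spectralRadius ℂ M := by
  rcases (spectrum ℂ M).eq_empty_or_nonempty with h | h
  · simp [sRad, spectralRadius, h]
  have hbdd : BddAbove ((fun μ => ‖μ‖) '' spectrum ℂ M) := (M.finite_spectrum.image _).bddAbove
  obtain ⟨μ, hμ, hμM⟩ : ∃ μ ∈ spectrum ℂ M, ‖μ‖ = sRad M :=
    (h.image _).csSup_mem (M.finite_spectrum.image _)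
  refine le_antisymm ?_ (iSup₂_le fun ν hν => ?_)
  · rw [← hμM, ← coe_nnnorm, ENNReal.ofReal_coe_nnreal]
    exact le_iSup₂ (f := fun k (_ : k ∈ spectrum ℂ M) => (‖k‖₊ : ℝ≥0∞)) μ hμ
  · rw [← ENNReal.ofReal_coe_nnreal, coe_nnnorm]
    exact ENNReal.ofReal_le_ofReal (le_csSup hbdd ⟨ν, hν, rfl⟩)

noncomputable def toEuclideanCLE (n : ℕ) :
    Matrix (Fin n) (Fin n) ℂ ≃L[ℂ] (EuclideanSpace ℂ (Fin n) →L[ℂ] EuclideanSpace ℂ (Fin n)) :=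
  (Matrix.toEuclideanCLM (𝕜 := ℂ) (n := Fin n)).toAlgEquiv.toLinearEquiv.toContinuousLinearEquiv

theorem spectralRadius_toEuclideanCLE (M : Matrix (Fin n) (Fin n) ℂ) :
    spectralRadius ℂ (toEuclideanCLE n M) = ENNReal.ofReal (sRad M) := by
  have hσ : spectrum ℂ (toEuclideanCLE n M) = spectrum ℂ M :=
    AlgEquiv.spectrum_eq (Matrix.toEuclideanCLM (𝕜 := ℂ) (n := Fin n)) M
  rw [ofReal_sRad, spectralRadius, spectralRadius, hσ]

theorem preimage_symm_toEuclideanCLE_specBall :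
    (toEuclideanCLE n).symm ⁻¹' specBall n = {b | spectralRadius ℂ b < 1} := by
  ext b
  change sRad _ < 1 ↔ _
  rw [← ENNReal.ofReal_lt_one, ← spectralRadius_toEuclideanCLE,
    ContinuousLinearEquiv.apply_symm_apply, mem_ofPred_eq]

end Matrix

/-- (Ransford–White) If `G : Ω_n → Ω_n` is holomorphic with `G(0) = 0`, then
`r(G(X)) ≤ r(X)` for all `X ∈ Ω_n`. -/
theorem stmt17 {n : ℕ} (G : Matrix (Fin n) (Fin n) ℂ → Matrix (Fin n) (Fin n) ℂ)
    (hol : DifferentiableOn ℂ G (specBall n))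
    (hmap : Set.MapsTo G (specBall n) (specBall n))
    (h0 : G 0 = 0) :
    ∀ X ∈ specBall n, sRad (G X) ≤ sRad X := by
  intro X hX
  set ψ := toEuclideanCLE n
  have hG' : DifferentiableOn ℂ (ψ ∘ G ∘ ψ.symm) (ψ.symm ⁻¹' specBall n) :=
    ψ.differentiable.comp_differentiableOn (hol.comp ψ.symm.differentiableOn (mapsTo_preimage _ _))
  have hmap' : MapsTo (ψ ∘ G ∘ ψ.symm) (ψ.symm ⁻¹' specBall n) (ψ.symm ⁻¹' specBall n) :=
    fun b hb => by simpa using hmap hb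
  rw [preimage_symm_toEuclideanCLE_specBall] at hG' hmap'
  have hGX := spectralRadius_apply_le_of_mapsTo hG' hmap' (by simp [h0]) (x := ψ X)
    (by rw [spectralRadius_toEuclideanCLE, ENNReal.ofReal_lt_one]; exact hX)
  simp only [Function.comp_apply, ContinuousLinearEquiv.symm_apply_apply] at hGX
  rwa [spectralRadius_toEuclideanCLE, spectralRadius_toEuclideanCLE,
    ENNReal.ofReal_le_ofReal_iff (sRad_nonneg X)] at hGX
end
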